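/- Suppose (Σ⁺, σ) is a topologically mixing one-sided countable Markov shift with property (BIP), f : Σ⁺ → ℝ is strictly positive, non-arithmetic, locally Hölder continuous, has a weak entropy gap at infinity, δ > d(f) is the unique constant with P(−δf) = 0, μ is a σ-invariant Gibbs state for −δf, and f̄ = ∫ f dμ satisfies 0 < f̄ < ∞. Then there exists G > 0 such that for every x ∈ Σ⁺ and every t > 0, Σ_{n≥1} Σ_{y : σ^n(y) = x} (1/n)·1_{{S_n f(y) ≤ t}}(y) ≤ G e^{tδ}/t. -/

import Mathlib

open scoped ENNReal NNReal
open Filter MeasureTheory Set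

namespace CMS

variable {A : Type*}

/-- The one-sided countable Markov shift space determined by transition matrix `T`. -/
def SigmaPlus (T : A → A → Prop) : Set (ℕ → A) :=
  {x | ∀ i, T (x i) (x (i + 1))}

/-- The shift map on `SigmaPlus T`. -/
def shift (T : A → A → Prop) (x : SigmaPlus T) : SigmaPlus T :=
  ⟨fun i => x.1 (i + 1), fun i => x.2 (i + 1)⟩

/-- Topological mixing. -/
def TopMixing (T : A → A → Prop) : Prop :=
  ∀ a b : A, ∃ N : ℕ, ∀ n ≥ N, ∃ x : SigmaPlus T, x.1 0 = a ∧ x.1 n = b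

/-- The big images and preimages property. -/
def BIP (T : A → A → Prop) : Prop :=
  ∃ B : Finset A, ∀ a : A, ∃ b₀ ∈ B, ∃ b₁ ∈ B, T b₀ a ∧ T a b₁

/-- Locally Hölder continuous. -/
def LocHolder (T : A → A → Prop) (f : SigmaPlus T → ℝ) : Prop :=
  ∃ C > (0 : ℝ), ∃ α > (0 : ℝ), ∀ n : ℕ, 1 ≤ n → ∀ x y : SigmaPlus T,
    (∀ i < n, x.1 i = y.1 i) → |f x - f y| ≤ C * Real.exp (-α * n)

/-- Birkhoff (ergodic) sum `S_n f`. -/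
noncomputable def birkhoff (T : A → A → Prop) (f : SigmaPlus T → ℝ) (n : ℕ)
    (x : SigmaPlus T) : ℝ :=
  ∑ i ∈ Finset.range n, f ((shift T)^[i] x)

/-- Points of period `n`: `Fix^n`. -/
def Mfix (T : A → A → Prop) (n : ℕ) : Set (SigmaPlus T) :=
  {x | (shift T)^[n] x = x}

/-- `S(f,a)`, the sup of `f` on the cylinder of the letter `a`. -/
noncomputable def Ssup (T : A → A → Prop) (f : SigmaPlus T → ℝ) (a : A) : ℝ :=
  sSup (f '' {x : SigmaPlus T | x.1 0 = a})

/-- `I(f,a)`, the inf of `f` on the cylinder of the letter `a`. -/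
noncomputable def Iinf (T : A → A → Prop) (f : SigmaPlus T → ℝ) (a : A) : ℝ :=
  sInf (f '' {x : SigmaPlus T | x.1 0 = a})

/-- The set of `s > 0` where `Z₁(f,s) = Σ_a e^{-s S(f,a)}` converges. -/
def convSet (T : A → A → Prop) (f : SigmaPlus T → ℝ) : Set ℝ :=
  {s | 0 < s ∧ Summable fun a : A => Real.exp (-s * Ssup T f a)}

/-- The critical exponent `d(f)` of `Z₁(f,·)`. -/
noncomputable def dcrit (T : A → A → Prop) (f : SigmaPlus T → ℝ) : ℝ :=
  sInf (convSet T f)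

/-- Eventually positive. -/
def EvPositive (T : A → A → Prop) (f : SigmaPlus T → ℝ) : Prop :=
  ∃ N : ℕ, ∃ B > (0 : ℝ), ∀ n ≥ N, ∀ x : SigmaPlus T, B < birkhoff T f n x

/-- Strictly positive: `inf f > 0`. -/
def StrictPositive (T : A → A → Prop) (f : SigmaPlus T → ℝ) : Prop :=
  ∃ c > (0 : ℝ), ∀ x : SigmaPlus T, c ≤ f x

/-- Non-arithmetic: the subgroup of `ℝ` generated by the periods is not cyclic. -/
def NonArithmetic (T : A → A → Prop) (f : SigmaPlus T → ℝ) : Prop :=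
  ¬ ∃ c : ℝ, ∀ n : ℕ, 1 ≤ n → ∀ x ∈ Mfix T n, ∃ m : ℤ, birkhoff T f n x = m * c

/-- Extended logarithm `ℝ≥0∞ → EReal`. -/
noncomputable def elog (x : ℝ≥0∞) : EReal :=
  if x = 0 then ⊥ else if x = ⊤ then ⊤ else ((Real.log x.toReal : ℝ) : EReal)

/-- The Gurevich partition sum `Z_n(f,a)` valued in `ℝ≥0∞`. -/
noncomputable def Zpart (T : A → A → Prop) (f : SigmaPlus T → ℝ) (a : A) (n : ℕ) : ℝ≥0∞ :=
  ∑' x : {x : SigmaPlus T // x ∈ Mfix T n ∧ x.1 0 = a},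
    ENNReal.ofReal (Real.exp (birkhoff T f n x))

/-- `p` is the Gurevich pressure of `f`. -/
def HasGurevichPressure (T : A → A → Prop) (f : SigmaPlus T → ℝ) (p : EReal) : Prop :=
  ∀ a : A, Tendsto (fun n : ℕ => (((n : ℝ)⁻¹ : ℝ) : EReal) * elog (Zpart T f a n))
    atTop (nhds p)

/-- `ℳ_f(n,t)`. -/
def Mset (T : A → A → Prop) (f : SigmaPlus T → ℝ) (n : ℕ) (t : ℝ) : Set (SigmaPlus T) :=
  {x | x ∈ Mfix T n ∧ birkhoff T f n x ≤ t}

/-- `M_f(t) = Σ_{n≥1} (1/n) #ℳ_f(n,t)`, valued in `[0,∞]`. -/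
noncomputable def Mcount (T : A → A → Prop) (f : SigmaPlus T → ℝ) (t : ℝ) : ℝ≥0∞ :=
  ∑' n : ℕ, ((n : ℝ≥0∞) + 1)⁻¹ * ((Mset T f (n + 1) t).encard : ℝ≥0∞)

/-- `ℛ_f(k,t)`. -/
def Rset (T : A → A → Prop) (f : SigmaPlus T → ℝ) (k : ℕ) (t : ℝ) : Set (SigmaPlus T) :=
  {x | x ∈ Mset T f k t ∧ ∀ n : ℕ, 1 ≤ n → n < k → x ∉ Mset T f n t}

/-- `R_f(t) = Σ_{k≥1} (1/k) #ℛ_f(k,t)`, valued in `[0,∞]`. -/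
noncomputable def Rcount (T : A → A → Prop) (f : SigmaPlus T → ℝ) (t : ℝ) : ℝ≥0∞ :=
  ∑' k : ℕ, ((k : ℝ≥0∞) + 1)⁻¹ * ((Rset T f (k + 1) t).encard : ℝ≥0∞)

/-- The cylinder determined by a word `w` of length `k`. -/
def cylinder (T : A → A → Prop) {k : ℕ} (w : Fin k → A) : Set (SigmaPlus T) :=
  {x | ∀ i : Fin k, x.1 i = w i}

/-- A σ-invariant Gibbs state for `f` (normalized so that `P(f) = 0`). -/
def GibbsState [MeasurableSpace A] (T : A → A → Prop) (f : SigmaPlus T → ℝ)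
    (μ : Measure (SigmaPlus T)) : Prop :=
  IsProbabilityMeasure μ ∧ MeasurePreserving (shift T) μ μ ∧
    ∃ B > (1 : ℝ), ∀ (n : ℕ), 1 ≤ n → ∀ (w : Fin n → A), ∀ x ∈ cylinder T w,
      1 / B ≤ (μ (cylinder T w)).toReal / Real.exp (birkhoff T f n x) ∧
        (μ (cylinder T w)).toReal / Real.exp (birkhoff T f n x) ≤ B

/-- The transfer (Ruelle–Perron–Frobenius) operator. -/
noncomputable def transfer (T : A → A → Prop) (g φ : SigmaPlus T → ℝ)
    (x : SigmaPlus T) : ℝ :=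
  ∑' y : {y : SigmaPlus T // shift T y = x}, Real.exp (g y) * φ y

/-- The renewal function `N_f(φ,x,t)`, valued in `[0,∞]`. -/
noncomputable def renewal (T : A → A → Prop) (f φ : SigmaPlus T → ℝ)
    (x : SigmaPlus T) (t : ℝ) : ℝ≥0∞ :=
  ∑' n : ℕ, ∑' y : {y : SigmaPlus T // (shift T)^[n] y = x},
    ENNReal.ofReal (if birkhoff T f n y ≤ t then φ y else 0)

/-!
Split the sum at lengths `n ≈ ε t`. Pick `s ∈ (d(f), δ)` with `Z₁(f, s) < ∞`. A Chernoff bound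
gives `#{y : σⁿ y = x, Sₙ f y ≤ t} ≤ e^{s t + n L}`, so the short lengths contribute
`O(t e^{(δ - η) t}) = O(e^{δ t} / t)`. For the long lengths `1 / n ≤ 1 / (ε t)`, and the number
of all preimages with `Sₙ f ≤ t` is `O(e^{δ t})`: those whose Birkhoff sum lies in `[k, k + 1)`
and whose lengths lie in one residue class modulo a large `m` have pairwise disjoint cylinders,
because `f ≥ c > 0` and bounded distortion separate the Birkhoff sums of lengths that differ by
at least `m`. Each such cylinder has Gibbs measure at least `e^{-δ (k + 1)} / B`, so there are at
most `B e^{δ (k + 1)}` of them, and summing over `k ≤ t` gives a geometric series.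
-/

lemma sum_range_pow_sub_le {r : ℝ} (hr0 : 0 ≤ r) (hr1 : r < 1) (n : ℕ) :
    ∑ i ∈ Finset.range n, r ^ (n - i) ≤ r / (1 - r) :=
  calc ∑ i ∈ Finset.range n, r ^ (n - i) = ∑ i ∈ Finset.Ico 1 (n + 1), r ^ i := by
        rw [Finset.sum_Ico_eq_sum_range, ← Finset.sum_range_reflect, Nat.add_sub_cancel]
        refine Finset.sum_congr rfl fun j hj => ?_
        have hjn := Finset.mem_range.mp hj
        congr 1
        omega
    _ ≤ r ^ 1 / (1 - r) := geom_sum_Ico_le_of_lt_one hr0 hr1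
    _ = r / (1 - r) := by rw [pow_one]

lemma sum_range_exp_mul_succ_le {δ t : ℝ} (hδ : 0 < δ) {K : ℕ} (hK : (K : ℝ) ≤ t + 1) :
    ∑ k ∈ Finset.range K, Real.exp (δ * (k + 1))
      ≤ Real.exp δ ^ 2 / (Real.exp δ - 1) * Real.exp (δ * t) := by
  have h1 : 1 < Real.exp δ := Real.one_lt_exp_iff.mpr hδ
  have hKt : Real.exp δ ^ K ≤ Real.exp δ * Real.exp (δ * t) := by
    rw [← Real.exp_nat_mul, ← Real.exp_add]
    exact Real.exp_le_exp.mpr (by nlinarith)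
  calc ∑ k ∈ Finset.range K, Real.exp (δ * (k + 1))
      = Real.exp δ * ∑ k ∈ Finset.range K, Real.exp δ ^ k := by
        rw [Finset.mul_sum]
        refine Finset.sum_congr rfl fun k _ => ?_
        rw [← Real.exp_nat_mul, ← Real.exp_add]
        ring_nf
    _ = Real.exp δ * ((Real.exp δ ^ K - 1) / (Real.exp δ - 1)) := by rw [geom_sum_eq h1.ne']
    _ ≤ Real.exp δ * (Real.exp δ * Real.exp (δ * t) / (Real.exp δ - 1)) := by
        gcongr
        linarith
    _ = Real.exp δ ^ 2 / (Real.exp δ - 1) * Real.exp (δ * t) := by ring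

lemma sq_le_two_div_sq_mul_exp {η t : ℝ} (hη : 0 < η) (ht : 0 ≤ t) :
    t ^ 2 ≤ 2 / η ^ 2 * Real.exp (η * t) := by
  have h := Real.pow_div_factorial_le_exp _ (mul_nonneg hη.le ht) 2
  rw [Nat.factorial_two, Nat.cast_two, mul_pow] at h
  rw [div_mul_eq_mul_div, le_div_iff₀ (by positivity)]
  linarith

lemma tsum_pi_fin_prod_eq_pow {α : Type*} (g : α → ℝ≥0∞) (n : ℕ) :
    ∑' w : Fin n → α, ∏ i, g (w i) = (∑' a, g a) ^ n := by
  induction n with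
  | zero => simp
  | succ n ih =>
    rw [← (Fin.consEquiv fun _ => α).tsum_eq, ENNReal.tsum_prod', pow_succ', ← ih,
      ← ENNReal.tsum_mul_right]
    refine tsum_congr fun a => ?_
    rw [← ENNReal.tsum_mul_left]
    refine tsum_congr fun w => ?_
    simp [Fin.prod_univ_succ]

lemma tsum_encard_eq_encard_prod {X ι : Type*} (s : ι → Set X) :
    ∑' i, ((s i).encard : ℝ≥0∞) = ({p : ι × X | p.2 ∈ s p.1}.encard : ℝ≥0∞) := by
  simp_rw [← ENNReal.tsum_set_one]
  rw [tsum_subtype _ fun _ => (1 : ℝ≥0∞), ENNReal.tsum_prod']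
  exact tsum_congr fun i => tsum_subtype (s i) fun _ => (1 : ℝ≥0∞)

lemma encard_mul_le_measure_univ {X ι : Type*} [MeasurableSpace X] (μ : Measure X)
    {S : Set ι} {s : ι → Set X} {q : ℝ≥0∞} (hs : ∀ i ∈ S, MeasurableSet (s i))
    (hd : S.PairwiseDisjoint s) (hq : ∀ i ∈ S, q ≤ μ (s i)) :
    (S.encard : ℝ≥0∞) * q ≤ μ univ :=
  calc (S.encard : ℝ≥0∞) * q = ∑' _ : S, q := (ENNReal.tsum_set_const S q).symm
    _ ≤ ∑' i : S, μ (s i) := ENNReal.tsum_le_tsum fun i => hq i i.2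
    _ ≤ μ (⋃ i : S, s i) := tsum_meas_le_meas_iUnion_of_disjoint μ (fun i => hs i i.2)
        fun i j hij => hd i.2 j.2 (Subtype.coe_ne_coe.mpr hij)
    _ ≤ μ univ := measure_mono (subset_univ _)

section Shift

variable {T : A → A → Prop}

lemma shift_iterate_apply (k : ℕ) (x : SigmaPlus T) (i : ℕ) :
    ((shift T)^[k] x).1 i = x.1 (i + k) := by
  induction k generalizing x with
  | zero => rfl
  | succ k ih => rw [Function.iterate_succ_apply, ih]; rfl

lemma eq_of_shift_iterate_eq {n : ℕ} {y y' : SigmaPlus T}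
    (h : (shift T)^[n] y = (shift T)^[n] y') (hagree : ∀ i < n, y.1 i = y'.1 i) : y = y' := by
  refine Subtype.ext (funext fun j => ?_)
  rcases lt_or_ge j n with hj | hj
  · exact hagree j hj
  · obtain ⟨i, rfl⟩ := Nat.exists_eq_add_of_le' hj
    rw [← shift_iterate_apply, ← shift_iterate_apply, h]

variable (f : SigmaPlus T → ℝ)

lemma birkhoff_one (x : SigmaPlus T) : birkhoff T f 1 x = f x := by
  simp [birkhoff]

lemma birkhoff_add (n k : ℕ) (x : SigmaPlus T) :
    birkhoff T f (n + k) x = birkhoff T f n x + birkhoff T f k ((shift T)^[n] x) := by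
  simp only [birkhoff, Finset.sum_range_add, ← Function.iterate_add_apply, add_comm _ n]

lemma birkhoff_neg_const_mul (δ : ℝ) (n : ℕ) (x : SigmaPlus T) :
    birkhoff T (fun z => -(δ * f z)) n x = -(δ * birkhoff T f n x) := by
  simp [birkhoff, Finset.mul_sum]

variable {f}

lemma mul_le_birkhoff {c : ℝ} (hc : ∀ z, c ≤ f z) (n : ℕ) (x : SigmaPlus T) :
    n * c ≤ birkhoff T f n x := by
  simpa [birkhoff] using
    Finset.card_nsmul_le_sum (Finset.range n) _ c fun i _ => hc ((shift T)^[i] x)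

end Shift

section Distortion

variable {T : A → A → Prop} {f : SigmaPlus T → ℝ} {c D : ℝ}

def BoundedDistortion (T : A → A → Prop) (f : SigmaPlus T → ℝ) (D : ℝ) : Prop :=
  ∀ n (y z : SigmaPlus T), (∀ i < n, y.1 i = z.1 i) →
    |birkhoff T f n y - birkhoff T f n z| ≤ D

lemma LocHolder.exists_boundedDistortion (hf : LocHolder T f) :
    ∃ D, 0 ≤ D ∧ BoundedDistortion T f D := by
  obtain ⟨C, hC, α, hα, hhold⟩ := hf
  have hr0 : 0 < Real.exp (-α) := Real.exp_pos _
  have hr1 : Real.exp (-α) < 1 := Real.exp_lt_one_iff.mpr (by linarith)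
  refine ⟨C * (Real.exp (-α) / (1 - Real.exp (-α))),
    mul_nonneg hC.le (div_nonneg hr0.le (by linarith)), fun n y z hagree => ?_⟩
  have hterm : ∀ i ∈ Finset.range n, |f ((shift T)^[i] y) - f ((shift T)^[i] z)|
      ≤ C * Real.exp (-α) ^ (n - i) := by
    intro i hi
    have hin := Finset.mem_range.mp hi
    rw [← Real.exp_nat_mul, mul_comm _ (-α)]
    refine hhold (n - i) (by omega) _ _ fun j hj => ?_
    rw [shift_iterate_apply, shift_iterate_apply]
    exact hagree _ (by omega)
  calc |birkhoff T f n y - birkhoff T f n z|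
      = |∑ i ∈ Finset.range n, (f ((shift T)^[i] y) - f ((shift T)^[i] z))| := by
        rw [birkhoff, birkhoff, Finset.sum_sub_distrib]
    _ ≤ ∑ i ∈ Finset.range n, C * Real.exp (-α) ^ (n - i) :=
        (Finset.abs_sum_le_sum_abs _ _).trans (Finset.sum_le_sum hterm)
    _ ≤ C * (Real.exp (-α) / (1 - Real.exp (-α))) := by
        rw [← Finset.mul_sum]
        exact mul_le_mul_of_nonneg_left (sum_range_pow_sub_le hr0.le hr1 n) hC.le

lemma Ssup_le_add (hD : BoundedDistortion T f D) (z : SigmaPlus T) :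
    Ssup T f (z.1 0) ≤ f z + D := by
  refine csSup_le ⟨f z, z, rfl, rfl⟩ ?_
  rintro _ ⟨z', hz', rfl⟩
  have h := hD 1 z' z fun i hi => by rw [Nat.lt_one_iff.mp hi]; exact hz'
  rw [birkhoff_one, birkhoff_one] at h
  linarith [(abs_le.mp h).2]

def cylinderOf (y : SigmaPlus T) (n : ℕ) : Set (SigmaPlus T) :=
  cylinder T fun i : Fin n => y.1 i

lemma mem_cylinderOf {y z : SigmaPlus T} {n : ℕ} :
    z ∈ cylinderOf y n ↔ ∀ i < n, z.1 i = y.1 i :=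
  ⟨fun h i hi => h ⟨i, hi⟩, fun h i => h i i.2⟩

lemma measurableSet_cylinderOf [MeasurableSpace A] [MeasurableSingletonClass A]
    (y : SigmaPlus T) (n : ℕ) : MeasurableSet (cylinderOf y n) := by
  simp only [cylinderOf, cylinder, Set.ofPred_forall]
  exact MeasurableSet.iInter fun i => (measurableSet_singleton (y.1 i)).preimage
    ((measurable_pi_apply _).comp measurable_subtype_coe)

lemma birkhoff_add_mul_le_of_mem_cylinderOf (hc : ∀ z, c ≤ f z)
    (hD : BoundedDistortion T f D) {y y' z : SigmaPlus T} {n k : ℕ}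
    (hz : z ∈ cylinderOf y n) (hz' : z ∈ cylinderOf y' (n + k)) :
    birkhoff T f n y + k * c ≤ birkhoff T f (n + k) y' + D := by
  have hagree : ∀ i < n, y.1 i = y'.1 i := fun i hi => by
    rw [← mem_cylinderOf.mp hz i hi, mem_cylinderOf.mp hz' i (by omega)]
  have hdist := (abs_le.mp (hD n y y' hagree)).2
  rw [birkhoff_add]
  linarith [mul_le_birkhoff hc k ((shift T)^[n] y')]

lemma GibbsState.exists_ofReal_exp_div_le_measure [MeasurableSpace A]
    {g : SigmaPlus T → ℝ} {μ : Measure (SigmaPlus T)} (hμ : GibbsState T g μ) :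
    ∃ B > 0, ∀ n ≥ 1, ∀ y : SigmaPlus T,
      ENNReal.ofReal (Real.exp (birkhoff T g n y) / B) ≤ μ (cylinderOf y n) := by
  obtain ⟨-, -, B, hB, hgibbs⟩ := hμ
  refine ⟨B, by linarith, fun n hn y => ENNReal.ofReal_le_of_le_toReal ?_⟩
  have h := (hgibbs n hn _ y (mem_cylinderOf.mpr fun _ _ => rfl)).1
  rw [le_div_iff₀ (Real.exp_pos _)] at h
  rwa [one_div_mul_eq_div] at h

end Distortion

section Chernoff

variable {T : A → A → Prop} {f : SigmaPlus T → ℝ} {D s : ℝ}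

def boundedPreimages (T : A → A → Prop) (f : SigmaPlus T → ℝ) (x : SigmaPlus T) (n : ℕ)
    (t : ℝ) : Set (SigmaPlus T) :=
  {y | (shift T)^[n] y = x ∧ birkhoff T f n y ≤ t}

lemma encard_boundedPreimages_le (hD : BoundedDistortion T f D) (hs : 0 ≤ s)
    (x : SigmaPlus T) (t : ℝ) (n : ℕ) :
    ((boundedPreimages T f x n t).encard : ℝ≥0∞)
      ≤ ENNReal.ofReal (Real.exp (s * (t + n * D)))
        * (∑' a, ENNReal.ofReal (Real.exp (-s * Ssup T f a))) ^ n := by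
  set P := boundedPreimages T f x n t
  set g : A → ℝ≥0∞ := fun a => ENNReal.ofReal (Real.exp (-s * Ssup T f a))
  have hword : ∀ y ∈ P,
      1 ≤ ENNReal.ofReal (Real.exp (s * (t + n * D))) * ∏ i : Fin n, g (y.1 i) := by
    rintro y ⟨-, hyt⟩
    have hS : ∑ i : Fin n, Ssup T f (y.1 i) ≤ t + n * D :=
      calc ∑ i : Fin n, Ssup T f (y.1 i) ≤ ∑ i : Fin n, (f ((shift T)^[i] y) + D) :=
            Finset.sum_le_sum fun i _ => by
              simpa [shift_iterate_apply] using Ssup_le_add hD ((shift T)^[i] y)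
        _ = birkhoff T f n y + n * D := by
            rw [Finset.sum_add_distrib, Fin.sum_univ_eq_sum_range (fun i => f ((shift T)^[i] y))]
            simp [birkhoff]
        _ ≤ t + n * D := by linarith
    have hsS := mul_le_mul_of_nonneg_left hS hs
    simp only [g]
    rw [← ENNReal.ofReal_prod_of_nonneg fun _ _ => (Real.exp_pos _).le, ← Real.exp_sum,
      ← ENNReal.ofReal_mul (Real.exp_pos _).le, ← Real.exp_add]
    refine ENNReal.one_le_ofReal.mpr (Real.one_le_exp ?_)
    rw [Finset.mul_sum] at hsS
    simp only [neg_mul, Finset.sum_neg_distrib]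
    linarith
  have hinj : Function.Injective fun (y : P) (i : Fin n) => y.1.1 i := fun y y' h =>
    Subtype.ext (eq_of_shift_iterate_eq (y.2.1.trans y'.2.1.symm) fun i hi => congrFun h ⟨i, hi⟩)
  calc (P.encard : ℝ≥0∞) = ∑' _ : P, (1 : ℝ≥0∞) := (ENNReal.tsum_set_one P).symm
    _ ≤ ∑' y : P, ENNReal.ofReal (Real.exp (s * (t + n * D))) * ∏ i : Fin n, g (y.1.1 i) :=
        ENNReal.tsum_le_tsum fun y => hword y y.2
    _ = ENNReal.ofReal (Real.exp (s * (t + n * D))) * ∑' y : P, ∏ i : Fin n, g (y.1.1 i) :=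
        ENNReal.tsum_mul_left
    _ ≤ ENNReal.ofReal (Real.exp (s * (t + n * D))) * ∑' w : Fin n → A, ∏ i, g (w i) := by
        gcongr
        exact ENNReal.tsum_comp_le_tsum_of_injective hinj fun w => ∏ i, g (w i)
    _ = _ := by rw [tsum_pi_fin_prod_eq_pow]

lemma exists_encard_boundedPreimages_le_exp (hD : BoundedDistortion T f D) (hD0 : 0 ≤ D)
    (hs : 0 ≤ s) (hsum : Summable fun a => Real.exp (-s * Ssup T f a)) :
    ∃ L ≥ 0, ∀ (x : SigmaPlus T) (t : ℝ) (n : ℕ),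
      ((boundedPreimages T f x n t).encard : ℝ≥0∞) ≤ ENNReal.ofReal (Real.exp (s * t + n * L)) := by
  set W := ∑' a, Real.exp (-s * Ssup T f a)
  have hW0 : 0 ≤ W := tsum_nonneg fun a => (Real.exp_pos _).le
  refine ⟨s * D + Real.log (W + 1),
    add_nonneg (mul_nonneg hs hD0) (Real.log_nonneg (by linarith)), fun x t n => ?_⟩
  have hW : ∑' a, ENNReal.ofReal (Real.exp (-s * Ssup T f a))
      ≤ ENNReal.ofReal (Real.exp (Real.log (W + 1))) := by
    rw [← ENNReal.ofReal_tsum_of_nonneg (fun a => (Real.exp_pos _).le) hsum,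
      Real.exp_log (by linarith)]
    exact ENNReal.ofReal_le_ofReal (by linarith)
  calc _ ≤ ENNReal.ofReal (Real.exp (s * (t + n * D)))
          * (∑' a, ENNReal.ofReal (Real.exp (-s * Ssup T f a))) ^ n :=
        encard_boundedPreimages_le hD hs x t n
    _ ≤ ENNReal.ofReal (Real.exp (s * (t + n * D)))
          * ENNReal.ofReal (Real.exp (Real.log (W + 1))) ^ n := by gcongr
    _ = ENNReal.ofReal (Real.exp (s * t + n * (s * D + Real.log (W + 1)))) := by
        rw [← ENNReal.ofReal_pow (Real.exp_pos _).le, ← ENNReal.ofReal_mul (Real.exp_pos _).le,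
          ← Real.exp_nat_mul, ← Real.exp_add]
        ring_nf

end Chernoff

section Renewal

variable {T : A → A → Prop} {f : SigmaPlus T → ℝ} {c D δ B : ℝ}

/-- `(n, y)` stands for the preimage `y` of `x` of length `n + 1`. -/
def preimageSlice (T : A → A → Prop) (f : SigmaPlus T → ℝ) (x : SigmaPlus T) (m k r : ℕ) :
    Set (ℕ × SigmaPlus T) :=
  {p | p.1 % m = r ∧ (shift T)^[p.1 + 1] p.2 = x ∧
    (k : ℝ) ≤ birkhoff T f (p.1 + 1) p.2 ∧ birkhoff T f (p.1 + 1) p.2 < k + 1}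

lemma disjoint_cylinderOf_of_mem_preimageSlice (hc0 : 0 ≤ c) (hc : ∀ z, c ≤ f z)
    (hD : BoundedDistortion T f D) {m : ℕ} (hm : 1 + D < m * c) {x : SigmaPlus T} {k r : ℕ}
    {p p' : ℕ × SigmaPlus T} (hp : p ∈ preimageSlice T f x m k r)
    (hp' : p' ∈ preimageSlice T f x m k r) (hlt : p.1 < p'.1) :
    Disjoint (cylinderOf p.2 (p.1 + 1)) (cylinderOf p'.2 (p'.1 + 1)) := by
  obtain ⟨n, y⟩ := p
  obtain ⟨n', y'⟩ := p'
  obtain ⟨hr, -, hk, -⟩ := hp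
  obtain ⟨hr', -, -, hk'⟩ := hp'
  obtain ⟨d, rfl⟩ := Nat.exists_eq_add_of_lt hlt
  have hmd : m ≤ d + 1 := by
    refine Nat.le_of_dvd d.succ_pos (Nat.dvd_of_mod_eq_zero ?_)
    simpa [Nat.add_assoc] using Nat.sub_mod_eq_zero_of_mod_eq (hr'.trans hr.symm)
  have hmd' : (m : ℝ) * c ≤ (d + 1 : ℕ) * c := by gcongr
  rw [Set.disjoint_left]
  intro z hz hz'
  rw [show n + d + 1 + 1 = n + 1 + (d + 1) by ring] at hz' hk'
  linarith [birkhoff_add_mul_le_of_mem_cylinderOf hc hD hz hz']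

lemma encard_preimageSlice_le [MeasurableSpace A] [MeasurableSingletonClass A]
    {μ : Measure (SigmaPlus T)} [IsProbabilityMeasure μ] (hc0 : 0 ≤ c) (hc : ∀ z, c ≤ f z)
    (hD : BoundedDistortion T f D) {m : ℕ} (hm : 1 + D < m * c) (hδ : 0 ≤ δ) (hB : 0 < B)
    (hμ : ∀ n ≥ 1, ∀ y : SigmaPlus T, ENNReal.ofReal
      (Real.exp (birkhoff T (fun z => -(δ * f z)) n y) / B) ≤ μ (cylinderOf y n))
    (x : SigmaPlus T) (k r : ℕ) :
    ((preimageSlice T f x m k r).encard : ℝ≥0∞) ≤ ENNReal.ofReal (B * Real.exp (δ * (k + 1))) := by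
  have hq : ∀ p ∈ preimageSlice T f x m k r,
      ENNReal.ofReal (Real.exp (-(δ * (k + 1))) / B) ≤ μ (cylinderOf p.2 (p.1 + 1)) := by
    rintro p ⟨-, -, -, hk⟩
    refine le_trans (ENNReal.ofReal_le_ofReal ?_) (hμ _ (Nat.le_add_left 1 p.1) p.2)
    rw [birkhoff_neg_const_mul]
    gcongr
  have hd : (preimageSlice T f x m k r).PairwiseDisjoint fun p => cylinderOf p.2 (p.1 + 1) := by
    intro p hp p' hp' hne
    rcases lt_trichotomy p.1 p'.1 with h | h | h
    · exact disjoint_cylinderOf_of_mem_preimageSlice hc0 hc hD hm hp hp' h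
    · refine Set.disjoint_left.mpr fun z hz hz' => hne (Prod.ext h ?_)
      refine eq_of_shift_iterate_eq (n := p.1 + 1) (by rw [hp.2.1, h, hp'.2.1]) fun i hi => ?_
      rw [← mem_cylinderOf.mp hz i hi, mem_cylinderOf.mp hz' i (h ▸ hi)]
    · exact (disjoint_cylinderOf_of_mem_preimageSlice hc0 hc hD hm hp' hp h).symm
  have hcount := encard_mul_le_measure_univ μ (fun p _ => measurableSet_cylinderOf _ _) hd hq
  rw [measure_univ, ← ENNReal.le_inv_iff_mul_le,
    ← ENNReal.ofReal_inv_of_pos (by positivity), inv_div, Real.exp_neg, div_inv_eq_mul] at hcount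
  exact hcount

lemma subset_biUnion_preimageSlice (hf : ∀ z, 0 ≤ f z) {m : ℕ} (hm : 0 < m)
    (x : SigmaPlus T) (t : ℝ) :
    {p : ℕ × SigmaPlus T | p.2 ∈ boundedPreimages T f x (p.1 + 1) t} ⊆
      ⋃ j ∈ Finset.range (⌊t⌋₊ + 1) ×ˢ Finset.range m, preimageSlice T f x m j.1 j.2 := by
  rintro ⟨n, y⟩ ⟨hyx, hyt⟩
  have h0 : 0 ≤ birkhoff T f (n + 1) y := by simpa using mul_le_birkhoff hf (n + 1) y
  simp only [Set.mem_iUnion, Finset.mem_product, Finset.mem_range]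
  exact ⟨(⌊birkhoff T f (n + 1) y⌋₊, n % m),
    ⟨Nat.lt_succ_of_le (Nat.floor_mono hyt), Nat.mod_lt _ hm⟩,
    rfl, hyx, Nat.floor_le h0, Nat.lt_floor_add_one _⟩

lemma exists_tsum_encard_boundedPreimages_le [MeasurableSpace A]
    [MeasurableSingletonClass A] {μ : Measure (SigmaPlus T)} (hc0 : 0 < c)
    (hc : ∀ z, c ≤ f z) (hD : BoundedDistortion T f D) (hδ : 0 < δ)
    (hμ : GibbsState T (fun z => -(δ * f z)) μ) :
    ∃ CN ≥ 0, ∀ (x : SigmaPlus T) (t : ℝ), 0 ≤ t →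
      ∑' n : ℕ, ((boundedPreimages T f x (n + 1) t).encard : ℝ≥0∞)
        ≤ ENNReal.ofReal (CN * Real.exp (δ * t)) := by
  have := hμ.1
  obtain ⟨B, hB, hgibbs⟩ := hμ.exists_ofReal_exp_div_le_measure
  set m := ⌊(1 + D) / c⌋₊ + 1
  have hm : 1 + D < m * c := by
    rw [← div_lt_iff₀ hc0]
    exact_mod_cast Nat.lt_floor_add_one _
  have hexp : 0 < Real.exp δ ^ 2 / (Real.exp δ - 1) :=
    div_pos (by positivity) (by linarith [Real.one_lt_exp_iff.mpr hδ])
  refine ⟨m * B * (Real.exp δ ^ 2 / (Real.exp δ - 1)), by positivity, fun x t ht => ?_⟩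
  set K := ⌊t⌋₊ + 1
  have hcover := (Set.encard_le_encard (subset_biUnion_preimageSlice
    (fun z => hc0.le.trans (hc z)) (Nat.succ_pos _ : 0 < m) x t)).trans
    (Finset.set_encard_biUnion_le _ _)
  rw [tsum_encard_eq_encard_prod]
  calc _ ≤ ∑ j ∈ Finset.range K ×ˢ Finset.range m,
          ((preimageSlice T f x m j.1 j.2).encard : ℝ≥0∞) :=
        (ENat.toENNReal_le.mpr hcover).trans_eq (map_sum ENat.toENNRealRingHom _ _)
    _ ≤ ∑ j ∈ Finset.range K ×ˢ Finset.range m,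
          ENNReal.ofReal (B * Real.exp (δ * (j.1 + 1))) :=
        Finset.sum_le_sum fun j _ =>
          encard_preimageSlice_le hc0.le hc hD hm hδ.le hB hgibbs x j.1 j.2
    _ = ENNReal.ofReal (m * B * ∑ k ∈ Finset.range K, Real.exp (δ * (k + 1))) := by
        rw [Finset.sum_product, Finset.mul_sum,
          ENNReal.ofReal_sum_of_nonneg fun _ _ => by positivity]
        refine Finset.sum_congr rfl fun k _ => ?_
        simp only [Finset.sum_const, Finset.card_range, nsmul_eq_mul]
        rw [mul_assoc, ENNReal.ofReal_mul (Nat.cast_nonneg m), ENNReal.ofReal_natCast]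
    _ ≤ ENNReal.ofReal (m * B * (Real.exp δ ^ 2 / (Real.exp δ - 1)) * Real.exp (δ * t)) := by
        rw [mul_assoc _ (Real.exp δ ^ 2 / _)]
        gcongr
        refine sum_range_exp_mul_succ_le hδ ?_
        simp only [K, Nat.cast_add, Nat.cast_one]
        linarith [Nat.floor_le ht]

end Renewal

lemma tsum_inv_succ_mul_le {E : ℕ → ℝ≥0∞} {a : ℝ≥0∞} {u : ℝ} (hu : 0 < u)
    (hE : ∀ n : ℕ, ((n + 1 : ℕ) : ℝ) ≤ u → E n ≤ a) :
    ∑' n : ℕ, ((n : ℝ≥0∞) + 1)⁻¹ * E n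
      ≤ ENNReal.ofReal u * a + (ENNReal.ofReal u)⁻¹ * ∑' n, E n := by
  set m := ⌊u⌋₊
  have hpt : ∀ n : ℕ, ((n : ℝ≥0∞) + 1)⁻¹ * E n
      ≤ (if n < m then a else 0) + (ENNReal.ofReal u)⁻¹ * E n := by
    intro n
    split_ifs with hn
    · refine le_add_right ((mul_le_of_le_one_left zero_le ?_).trans
        (hE n ((Nat.cast_le.mpr hn).trans (Nat.floor_le hu.le))))
      exact ENNReal.inv_le_one.mpr le_add_self
    · rw [zero_add]
      gcongr
      have hun : u ≤ (n : ℝ) + 1 :=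
        (Nat.lt_floor_add_one _).le.trans (by exact_mod_cast Nat.succ_le_succ (not_lt.mp hn))
      calc ENNReal.ofReal u ≤ ENNReal.ofReal ((n : ℝ) + 1) := ENNReal.ofReal_le_ofReal hun
        _ = (n : ℝ≥0∞) + 1 := by rw [← Nat.cast_succ, ENNReal.ofReal_natCast, Nat.cast_succ]
  have hhead : ∑' n : ℕ, (if n < m then a else 0) = m * a := by
    rw [tsum_eq_sum (s := Finset.range m) fun n hn => if_neg (by simpa using hn),
      Finset.sum_ite_of_true fun n hn => Finset.mem_range.mp hn, Finset.sum_const,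
      Finset.card_range, nsmul_eq_mul]
  calc ∑' n : ℕ, ((n : ℝ≥0∞) + 1)⁻¹ * E n
      ≤ ∑' n : ℕ, ((if n < m then a else 0) + (ENNReal.ofReal u)⁻¹ * E n) :=
        ENNReal.tsum_le_tsum hpt
    _ = m * a + (ENNReal.ofReal u)⁻¹ * ∑' n, E n := by
        rw [ENNReal.tsum_add, ENNReal.tsum_mul_left, hhead]
    _ ≤ ENNReal.ofReal u * a + (ENNReal.ofReal u)⁻¹ * ∑' n, E n := by
        gcongr
        rw [← ENNReal.ofReal_natCast]
        exact ENNReal.ofReal_le_ofReal (Nat.floor_le hu.le)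

lemma exists_tsum_inv_succ_mul_le {s δ L CN : ℝ} (hsδ : s < δ) (hL : 0 ≤ L) (hCN : 0 ≤ CN) :
    ∃ G > 0, ∀ t > (0 : ℝ), ∀ E : ℕ → ℝ≥0∞,
      (∀ n : ℕ, E n ≤ ENNReal.ofReal (Real.exp (s * t + (n + 1 : ℕ) * L))) →
      ∑' n, E n ≤ ENNReal.ofReal (CN * Real.exp (δ * t)) →
      ∑' n : ℕ, ((n : ℝ≥0∞) + 1)⁻¹ * E n ≤ ENNReal.ofReal (G * Real.exp (t * δ) / t) := by
  set η := (δ - s) / 2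
  set ε := η / (L + 1)
  have hη : 0 < η := by simp only [η]; linarith
  have hδη : δ - η = s + η := by simp only [η]; ring
  have hε : 0 < ε := by positivity
  have hεL : ε * L ≤ η := by
    rw [div_mul_eq_mul_div, div_le_iff₀ (by linarith)]
    nlinarith
  refine ⟨2 * ε / η ^ 2 + CN / ε, by positivity, fun t ht E hchernoff hsum => ?_⟩
  have hεt : 0 < ε * t := by positivity
  have hshort : ∀ n : ℕ, ((n + 1 : ℕ) : ℝ) ≤ ε * t →
      E n ≤ ENNReal.ofReal (Real.exp ((δ - η) * t)) := fun n hn =>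
    (hchernoff n).trans (ENNReal.ofReal_le_ofReal (Real.exp_le_exp.mpr (by
      nlinarith [mul_le_mul_of_nonneg_right hn hL, mul_le_mul_of_nonneg_right hεL ht.le])))
  have hexp : Real.exp (t * δ) = Real.exp ((δ - η) * t) * Real.exp (η * t) := by
    rw [← Real.exp_add]; ring_nf
  have hhead : ε * t * Real.exp ((δ - η) * t) ≤ 2 * ε / η ^ 2 * Real.exp (t * δ) / t := by
    rw [le_div_iff₀ ht, hexp]
    calc ε * t * Real.exp ((δ - η) * t) * t
        = ε * Real.exp ((δ - η) * t) * t ^ 2 := by ring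
      _ ≤ ε * Real.exp ((δ - η) * t) * (2 / η ^ 2 * Real.exp (η * t)) := by
          gcongr
          exact sq_le_two_div_sq_mul_exp hη ht.le
      _ = _ := by ring
  calc ∑' n : ℕ, ((n : ℝ≥0∞) + 1)⁻¹ * E n
      ≤ ENNReal.ofReal (ε * t) * ENNReal.ofReal (Real.exp ((δ - η) * t))
          + (ENNReal.ofReal (ε * t))⁻¹ * ∑' n, E n := tsum_inv_succ_mul_le hεt hshort
    _ ≤ ENNReal.ofReal (ε * t * Real.exp ((δ - η) * t))
          + ENNReal.ofReal ((ε * t)⁻¹ * (CN * Real.exp (δ * t))) := by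
        rw [← ENNReal.ofReal_mul hεt.le, ENNReal.ofReal_mul (inv_nonneg.mpr hεt.le),
          ENNReal.ofReal_inv_of_pos hεt]
        gcongr
    _ ≤ ENNReal.ofReal (2 * ε / η ^ 2 * Real.exp (t * δ) / t)
          + ENNReal.ofReal (CN / ε * Real.exp (t * δ) / t) := by
        refine add_le_add (ENNReal.ofReal_le_ofReal hhead) (le_of_eq ?_)
        rw [mul_comm t δ]
        field_simp
    _ = ENNReal.ofReal ((2 * ε / η ^ 2 + CN / ε) * Real.exp (t * δ) / t) := by
        rw [← ENNReal.ofReal_add (by positivity) (by positivity)]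
        congr 1
        ring

theorem coarse_weighted_preimage_bound_general
    {A : Type*} [MeasurableSpace A] [MeasurableSingletonClass A]
    (T : A → A → Prop)
    (f : SigmaPlus T → ℝ) (δ : ℝ) (μ : Measure (SigmaPlus T))
    (hhold : LocHolder T f)
    (hpos : StrictPositive T f)
    (hfin : (convSet T f).Nonempty)
    (hδ : dcrit T f < δ)
    (hμ : GibbsState T (fun x => -(δ * f x)) μ) :
    ∃ G > (0 : ℝ), ∀ x : SigmaPlus T, ∀ t > (0 : ℝ),
      (∑' n : ℕ, ((n : ℝ≥0∞) + 1)⁻¹ *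
        ({y : SigmaPlus T | (shift T)^[n + 1] y = x ∧
            birkhoff T f (n + 1) y ≤ t}.encard : ℝ≥0∞))
        ≤ ENNReal.ofReal (G * Real.exp (t * δ) / t) := by
  obtain ⟨D, hD0, hD⟩ := hhold.exists_boundedDistortion
  obtain ⟨c, hc0, hc⟩ := hpos
  obtain ⟨s, ⟨hs0, hsum⟩, hsδ⟩ := (csInf_lt_iff ⟨0, fun _ h => h.1.le⟩ hfin).mp hδ
  obtain ⟨L, hL0, hchernoff⟩ := exists_encard_boundedPreimages_le_exp hD hD0 hs0.le hsum
  obtain ⟨CN, hCN0, hrenewal⟩ :=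
    exists_tsum_encard_boundedPreimages_le hc0 hc hD (hs0.trans hsδ) hμ
  obtain ⟨G, hG0, hG⟩ := exists_tsum_inv_succ_mul_le hsδ hL0 hCN0
  exact ⟨G, hG0, fun x t ht => hG t ht _ (fun n => hchernoff x t (n + 1)) (hrenewal x t ht.le)⟩

/-- Coarse estimate: `Σ_{n≥1} (1/n) #{y : σⁿ y = x, S_n f(y) ≤ t} ≤ G e^{tδ}/t`. -/
theorem coarse_weighted_preimage_bound
    {A : Type*} [Countable A] [MeasurableSpace A] [MeasurableSingletonClass A]
    (T : A → A → Prop)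
    (f : SigmaPlus T → ℝ) (δ : ℝ) (μ : Measure (SigmaPlus T))
    (hmix : TopMixing T) (hbip : BIP T)
    (hhold : LocHolder T f)
    (hpos : StrictPositive T f)
    (hna : NonArithmetic T f)
    (hfin : (convSet T f).Nonempty)
    (hd0 : 0 < dcrit T f)
    (hδ : dcrit T f < δ)
    (hP : HasGurevichPressure T (fun x => -(δ * f x)) 0)
    (hμ : GibbsState T (fun x => -(δ * f x)) μ)
    (hfint : Integrable f μ)
    (hfbar : 0 < ∫ x, f x ∂μ) :
    ∃ G > (0 : ℝ), ∀ x : SigmaPlus T, ∀ t > (0 : ℝ),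
      (∑' n : ℕ, ((n : ℝ≥0∞) + 1)⁻¹ *
        ({y : SigmaPlus T | (shift T)^[n + 1] y = x ∧
            birkhoff T f (n + 1) y ≤ t}.encard : ℝ≥0∞))
        ≤ ENNReal.ofReal (G * Real.exp (t * δ) / t) :=
  coarse_weighted_preimage_bound_general T f δ μ hhold hpos hfin hδ hμ

end CMS
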